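/- Let a > 0. Define, for t > 0 and x, s ∈ ℝ, the kernel K_a(x,s,t) = √(a/π) · (e^{2at} − e^{-2at})^{-1/2} · exp( −a·(e^{at}x − e^{-at}s)² / (e^{2at} − e^{-2at}) + (a/2)·(x² − s²) ). Then for every fixed s ∈ ℝ, the function (t,x) ↦ K_a(x,s,t) satisfies the heat equation for the real harmonic oscillator: ∂K/∂t (x,s,t) = ∂²K/∂x² (x,s,t) − a²·x²·K(x,s,t) for all t > 0 and x ∈ ℝ. -/

import Mathlib

open Real

/-- The Mehler-type heat kernel of the real harmonic oscillator obtained via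
the Bargmann transform. -/
noncomputable def mehlerKernel (a x s t : ℝ) : ℝ :=
  Real.sqrt (a / Real.pi) * (Real.sqrt (Real.exp (2 * a * t) - Real.exp (-(2 * a * t))))⁻¹ *
    Real.exp (-(a * (Real.exp (a * t) * x - Real.exp (-(a * t)) * s) ^ 2)
        / (Real.exp (2 * a * t) - Real.exp (-(2 * a * t)))
      + (a / 2) * (x ^ 2 - s ^ 2))

/-! In Mehler's form
`K = √(a/π) (2 sinh 2at)^{-1/2} exp (-(a/2) coth 2at (x² + s²) + a x s / sinh 2at)`
the kernel is a Gaussian in `x`, so `∂ₓ²K` and `∂ₜK` are both `K` times explicit rational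
functions of `cosh 2at` and `sinh 2at`; the heat equation reduces to `cosh² - sinh² = 1`. -/

theorem hasDerivAt_const_mul_exp_quadratic (C p q r x : ℝ) :
    HasDerivAt (fun y ↦ C * exp (p * y ^ 2 + q * y + r))
      (C * exp (p * x ^ 2 + q * x + r) * (2 * p * x + q)) x := by
  have hquad : HasDerivAt (fun y ↦ p * y ^ 2 + q * y + r) (2 * p * x + q) x := by
    refine ((((hasDerivAt_pow 2 x).const_mul p).add
      ((hasDerivAt_id' x).const_mul q)).add_const r).congr_deriv ?_
    ring
  exact (hquad.exp.const_mul C).congr_deriv (by ring)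

theorem iteratedDeriv_two_const_mul_exp_quadratic (C p q r x : ℝ) :
    iteratedDeriv 2 (fun y ↦ C * exp (p * y ^ 2 + q * y + r)) x
      = C * exp (p * x ^ 2 + q * x + r) * ((2 * p * x + q) ^ 2 + 2 * p) := by
  have hderiv : deriv (fun y ↦ C * exp (p * y ^ 2 + q * y + r))
      = fun y ↦ C * exp (p * y ^ 2 + q * y + r) * (2 * p * y + q) :=
    funext fun y ↦ (hasDerivAt_const_mul_exp_quadratic C p q r y).deriv
  have hlin : HasDerivAt (fun y ↦ 2 * p * y + q) (2 * p) x := by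
    simpa using ((hasDerivAt_id x).const_mul (2 * p)).add_const q
  rw [iteratedDeriv_succ, iteratedDeriv_one, hderiv]
  exact (((hasDerivAt_const_mul_exp_quadratic C p q r x).mul hlin).congr_deriv (by ring)).deriv

theorem hasDerivAt_const_mul_inv_sqrt_mul_exp {D φ : ℝ → ℝ} {D' φ' t : ℝ} (c : ℝ)
    (hD : HasDerivAt D D' t) (hφ : HasDerivAt φ φ' t) (hpos : 0 < D t) :
    HasDerivAt (fun t ↦ c * (√(D t))⁻¹ * exp (φ t))
      (c * (√(D t))⁻¹ * exp (φ t) * (φ' - D' / (2 * D t))) t := by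
  have hsqrt : 0 < √(D t) := sqrt_pos.mpr hpos
  refine ((((hD.sqrt hpos.ne').inv hsqrt.ne').const_mul c).mul hφ.exp).congr_deriv ?_
  simp only [Pi.inv_apply]
  have hsq := sq_sqrt hpos.le
  set S := √(D t)
  rw [← hsq]
  field_simp
  ring

theorem mehlerKernel_eq_sinh_cosh (a x s t : ℝ) :
    mehlerKernel a x s t = √(a / π) * (√(2 * sinh (2 * a * t)))⁻¹ *
      exp (-(a * cosh (2 * a * t) / (2 * sinh (2 * a * t))) * (x ^ 2 + s ^ 2)
        + a * s / sinh (2 * a * t) * x) := by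
  have hE : exp (2 * a * t) - exp (-(2 * a * t)) = 2 * sinh (2 * a * t) := by
    rw [sinh_eq]; ring
  rw [mehlerKernel, hE]
  rcases eq_or_ne (sinh (2 * a * t)) 0 with hS | hS
  · simp [hS] -- both sides vanish, since `(√0)⁻¹ = 0`
  congr 2
  have hsq : exp (2 * a * t) = exp (a * t) ^ 2 := by rw [← exp_nat_mul]; ring_nf
  have hsinh : sinh (2 * a * t) = (exp (a * t) ^ 4 - 1) / (2 * exp (a * t) ^ 2) := by
    rw [sinh_eq, exp_neg, hsq]
    field_simp
  have hcosh : cosh (2 * a * t) = (exp (a * t) ^ 4 + 1) / (2 * exp (a * t) ^ 2) := by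
    rw [cosh_eq, exp_neg, hsq]
    field_simp
  have hu4 : exp (a * t) ^ 4 - 1 ≠ 0 := (div_ne_zero_iff.mp (hsinh ▸ hS)).1
  rw [hsinh, hcosh, exp_neg]
  field_simp
  ring

theorem iteratedDeriv_two_mehlerKernel (a s t x : ℝ) :
    iteratedDeriv 2 (fun x ↦ mehlerKernel a x s t) x = mehlerKernel a x s t *
      ((a * (s - cosh (2 * a * t) * x) / sinh (2 * a * t)) ^ 2
        - a * cosh (2 * a * t) / sinh (2 * a * t)) := by
  have hgauss : (fun x ↦ mehlerKernel a x s t) =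
      fun y ↦ √(a / π) * (√(2 * sinh (2 * a * t)))⁻¹ *
        exp (-(a * cosh (2 * a * t) / (2 * sinh (2 * a * t))) * y ^ 2 + a * s / sinh (2 * a * t) * y
          + -(a * cosh (2 * a * t) / (2 * sinh (2 * a * t))) * s ^ 2) := by
    funext y
    rw [mehlerKernel_eq_sinh_cosh]
    ring_nf
  rw [hgauss, iteratedDeriv_two_const_mul_exp_quadratic, ← congrFun hgauss x]
  ring

theorem hasDerivAt_mehlerKernel_time (a x s : ℝ) {t : ℝ} (hS : 0 < sinh (2 * a * t)) :
    HasDerivAt (fun t ↦ mehlerKernel a x s t) (mehlerKernel a x s t *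
      (a ^ 2 * (x ^ 2 + s ^ 2 - 2 * cosh (2 * a * t) * x * s) / sinh (2 * a * t) ^ 2
        - a * cosh (2 * a * t) / sinh (2 * a * t))) t := by
  have hlin : HasDerivAt (fun t ↦ 2 * a * t) (2 * a) t := by
    simpa using (hasDerivAt_id t).const_mul (2 * a)
  have hsinh := hlin.sinh
  have hcosh := hlin.cosh
  have hexponent : HasDerivAt
      (fun t ↦ -(a * cosh (2 * a * t) / (2 * sinh (2 * a * t))) * (x ^ 2 + s ^ 2)
        + a * s / sinh (2 * a * t) * x)
      (a ^ 2 * (x ^ 2 + s ^ 2 - 2 * cosh (2 * a * t) * x * s) / sinh (2 * a * t) ^ 2) t := by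
    refine (((((hcosh.const_mul a).div (hsinh.const_mul 2) (by positivity)).neg).mul_const _).add
      (((hasDerivAt_const t (a * s)).div hsinh hS.ne').mul_const x)).congr_deriv ?_
    have hpyth := cosh_sq (2 * a * t)
    generalize cosh (2 * a * t) = C at hpyth ⊢
    generalize sinh (2 * a * t) = S at hS hpyth ⊢
    field_simp
    linear_combination a ^ 2 * (x ^ 2 + s ^ 2) * hpyth
  simp_rw [mehlerKernel_eq_sinh_cosh]
  refine (hasDerivAt_const_mul_inv_sqrt_mul_exp (√(a / π)) (hsinh.const_mul 2) hexponent
    (by positivity)).congr_deriv ?_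
  field_simp

theorem mehlerKernel_heat (a : ℝ) (ha : 0 < a) (s : ℝ) :
    ∀ (t : ℝ), 0 < t → ∀ (x : ℝ),
      deriv (fun t' : ℝ => mehlerKernel a x s t') t =
        iteratedDeriv 2 (fun x' : ℝ => mehlerKernel a x' s t) x
          - a ^ 2 * x ^ 2 * mehlerKernel a x s t := by
  intro t ht x
  have hS : 0 < sinh (2 * a * t) := sinh_pos_iff.mpr (by positivity)
  rw [(hasDerivAt_mehlerKernel_time a x s hS).deriv, iteratedDeriv_two_mehlerKernel]
  have hpyth := cosh_sq (2 * a * t)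
  generalize cosh (2 * a * t) = C at hpyth ⊢
  generalize sinh (2 * a * t) = S at hS hpyth ⊢
  field_simp
  linear_combination -(a * x ^ 2 * mehlerKernel a x s t) * hpyth
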